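/- Assume U^i > 0 for every player i. Suppose a mixed strategy profile x and reals ū^i, u^i_s, r^i_s, f^i_s, g^i_s, b^i_s ∈ {0,1} (for all players i and s ∈ S_i) satisfy the MIMLP4 constraints — u^i_s = u_i(s, x), ū^i ≥ u^i_s, r^i_s = ū^i − u^i_s, r^i_s ≥ 0, f^i_s ≥ r^i_s / U^i, f^i_s ≥ b^i_s, g^i_s ≥ x^i(s), g^i_s ≥ 1 − b^i_s. Then the objective value ∑_{i=1}^n ∑_{s∈S_i} (f^i_s + g^i_s) is ≥ ∑_{i=1}^n |S_i|, and if it equals ∑_{i=1}^n |S_i| then x is a Nash equilibrium. -/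

import Mathlib

/-!
The constraints force `f^i_s + g^i_s ≥ 1` strategy by strategy: if `b^i_s = 1` then
`f^i_s ≥ 1` and `g^i_s ≥ x^i(s) ≥ 0`, and if `b^i_s = 0` then `g^i_s ≥ 1` and `f^i_s ≥ 0`. Hence an objective value of `∑ᵢ |S_i|`
forces `f^i_s + g^i_s = 1` everywhere, which (as `U^i > 0`) leaves only `x^i(s) = 0` or
`r^i_s = 0`. So every strategy in the support of `x^i` earns exactly `ū^i`, the maximum of
the `u_i(s, x)`; `U_i(x) = ū^i` while every deviation earns an average of values `≤ ū^i`.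
-/

open Finset

/-- Expected payoff `U_i(x)` of player `i` under the mixed strategy profile `x`. -/
def expPayoff {n : ℕ} {S : Fin n → Type} [∀ i, Fintype (S i)]
    (A : Fin n → (∀ j, S j) → ℝ) (x : ∀ i, S i → ℝ) (i : Fin n) : ℝ :=
  ∑ t : ∀ j, S j, A i t * ∏ j, x j (t j)

/-- Expected payoff `u_i(s, x)` of player `i` playing the pure strategy `s` while the
other players play their mixed strategies from `x`: summing over full pure profiles `t`
with `t i = s` is the same as summing over tuples `ŝ` of pure strategies of the others. -/
def purePayoff {n : ℕ} {S : Fin n → Type} [∀ i, Fintype (S i)] [∀ i, DecidableEq (S i)]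
    (A : Fin n → (∀ j, S j) → ℝ) (x : ∀ i, S i → ℝ) (i : Fin n) (s : S i) : ℝ :=
  ∑ t : ∀ j, S j, if t i = s then A i t * ∏ j ∈ Finset.univ.erase i, x j (t j) else 0

/-- `U^i`: the maximum difference of any two payoffs of player `i`. -/
noncomputable def payoffRange {n : ℕ} {S : Fin n → Type} [∀ i, Fintype (S i)]
    [∀ i, Nonempty (S i)] (A : Fin n → (∀ j, S j) → ℝ) (i : Fin n) : ℝ :=
  Finset.univ.sup' Finset.univ_nonempty (A i) - Finset.univ.inf' Finset.univ_nonempty (A i)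

section Payoff

variable {n : ℕ} {S : Fin n → Type} [∀ i, Fintype (S i)] [∀ i, DecidableEq (S i)]

theorem expPayoff_update_eq_sum_mul_purePayoff (A : Fin n → (∀ j, S j) → ℝ)
    (x : ∀ i, S i → ℝ) (i : Fin n) (y : S i → ℝ) :
    expPayoff A (Function.update x i y) i = ∑ s, y s * purePayoff A x i s := by
  simp only [expPayoff, purePayoff, mul_sum, mul_ite, mul_zero]
  rw [sum_comm]
  refine sum_congr rfl fun t _ => ?_
  rw [sum_ite_eq, if_pos (mem_univ _), ← mul_prod_erase univ _ (mem_univ i),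
    Function.update_self,
    prod_congr rfl fun j hj => by rw [Function.update_of_ne (ne_of_mem_erase hj)]]
  ring

theorem expPayoff_eq_sum_mul_purePayoff (A : Fin n → (∀ j, S j) → ℝ)
    (x : ∀ i, S i → ℝ) (i : Fin n) :
    expPayoff A x i = ∑ s, x i s * purePayoff A x i s := by
  simpa using expPayoff_update_eq_sum_mul_purePayoff A x i (x i)

theorem expPayoff_update_le_of_slackness (A : Fin n → (∀ j, S j) → ℝ)
    (x : ∀ i, S i → ℝ) (i : Fin n) (c : ℝ) (hx1 : ∑ s, x i s = 1)
    (hle : ∀ s, purePayoff A x i s ≤ c)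
    (hslack : ∀ s, x i s * (c - purePayoff A x i s) = 0)
    (y : S i → ℝ) (hy0 : ∀ s, 0 ≤ y s) (hy1 : ∑ s, y s = 1) :
    expPayoff A (Function.update x i y) i ≤ expPayoff A x i := by
  have hx : expPayoff A x i = c := by
    rw [expPayoff_eq_sum_mul_purePayoff, ← one_mul c, ← hx1, sum_mul]
    exact sum_congr rfl fun s _ => by linarith [hslack s]
  rw [expPayoff_update_eq_sum_mul_purePayoff, hx]
  calc ∑ s, y s * purePayoff A x i s ≤ ∑ s, y s * c :=
        sum_le_sum fun s _ => mul_le_mul_of_nonneg_left (hle s) (hy0 s)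
    _ = c := by rw [← sum_mul, hy1, one_mul]

end Payoff

section Constraints

variable {f g b p r U : ℝ}

theorem one_le_add_of_mimlp4 (hb : b = 0 ∨ b = 1) (hp : 0 ≤ p) (hfb : b ≤ f) (hgp : p ≤ g)
    (hgb : 1 - b ≤ g) : 1 ≤ f + g := by
  rcases hb with rfl | rfl <;> linarith

theorem mul_eq_zero_of_mimlp4 (hb : b = 0 ∨ b = 1) (hp : 0 ≤ p) (hr : 0 ≤ r) (hU : 0 < U)
    (hfr : r / U ≤ f) (hfb : b ≤ f) (hgp : p ≤ g) (hgb : 1 - b ≤ g) (h : f + g = 1) :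
    p * r = 0 := by
  rcases hb with rfl | rfl
  · have : r / U ≤ 0 := by linarith
    rw [le_antisymm (by simpa using (div_le_iff₀ hU).1 this) hr, mul_zero]
  · rw [le_antisymm (by linarith) hp, zero_mul]

end Constraints

theorem card_le_sum_sum {ι : Type*} [Fintype ι] {κ : ι → Type*} [∀ i, Fintype (κ i)]
    {a : ∀ i, κ i → ℝ} (h : ∀ i k, 1 ≤ a i k) :
    ∑ i, (Fintype.card (κ i) : ℝ) ≤ ∑ i, ∑ k, a i k := by
  simp only [Fintype.card_eq_sum_ones, Nat.cast_sum, Nat.cast_one]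
  exact sum_le_sum fun i _ => sum_le_sum fun k _ => h i k

theorem eq_one_of_sum_sum_eq_card {ι : Type*} [Fintype ι] {κ : ι → Type*}
    [∀ i, Fintype (κ i)] {a : ∀ i, κ i → ℝ} (h : ∀ i k, 1 ≤ a i k)
    (heq : ∑ i, ∑ k, a i k = ∑ i, (Fintype.card (κ i) : ℝ)) (i : ι) (k : κ i) :
    a i k = 1 := by
  simp only [Fintype.card_eq_sum_ones, Nat.cast_sum, Nat.cast_one] at heq
  have hrow := (sum_eq_sum_iff_of_le fun i _ => sum_le_sum fun k _ => h i k).1 heq.symm i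
    (mem_univ i)
  exact ((sum_eq_sum_iff_of_le fun k _ => h i k).1 hrow k (mem_univ k)).symm

theorem mimlp4_objective_bound_and_optimal_gives_nash_general
    (n : ℕ) (S : Fin n → Type)
    [∀ i, Fintype (S i)] [∀ i, Nonempty (S i)] [∀ i, DecidableEq (S i)]
    (A : Fin n → (∀ j, S j) → ℝ)
    (hU : ∀ i, 0 < payoffRange A i)
    (x : ∀ i, S i → ℝ)
    (hx0 : ∀ i s, 0 ≤ x i s) (hx1 : ∀ i, ∑ s, x i s = 1)
    (ubar : Fin n → ℝ) (u r f g b : ∀ i, S i → ℝ)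
    (hfeas : ∀ (i : Fin n) (s : S i),
        (b i s = 0 ∨ b i s = 1) ∧
        u i s = purePayoff A x i s ∧
        u i s ≤ ubar i ∧
        r i s = ubar i - u i s ∧
        0 ≤ r i s ∧
        r i s / payoffRange A i ≤ f i s ∧
        b i s ≤ f i s ∧
        x i s ≤ g i s ∧
        1 - b i s ≤ g i s) :
    ∑ i, (Fintype.card (S i) : ℝ) ≤ ∑ i, ∑ s, (f i s + g i s) ∧
    (∑ i, ∑ s, (f i s + g i s) = ∑ i, (Fintype.card (S i) : ℝ) →
      ∀ (i : Fin n) (y : S i → ℝ), (∀ s, 0 ≤ y s) → ∑ s, y s = 1 →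
      expPayoff A (Function.update x i y) i ≤ expPayoff A x i) := by
  have hone : ∀ i s, 1 ≤ f i s + g i s := fun i s => by
    obtain ⟨hb, -, -, -, -, -, hfb, hgx, hgb⟩ := hfeas i s
    exact one_le_add_of_mimlp4 hb (hx0 i s) hfb hgx hgb
  refine ⟨card_le_sum_sum hone, fun heq i y hy0 hy1 => ?_⟩
  refine expPayoff_update_le_of_slackness A x i (ubar i) (hx1 i)
    (fun s => ?_) (fun s => ?_) y hy0 hy1
  · obtain ⟨-, hu, hle, -⟩ := hfeas i s
    rwa [← hu]
  obtain ⟨hb, hu, -, hr_eq, hr, hfr, hfb, hgx, hgb⟩ := hfeas i s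
  rw [← hu, ← hr_eq]
  exact mul_eq_zero_of_mimlp4 hb (hx0 i s) hr (hU i) hfr hfb hgx hgb
    (eq_one_of_sum_sum_eq_card hone heq i s)

/-- Assume `U^i > 0` for every player. If the mixed strategy profile `x`
together with `ū^i`, `u^i_s`, `r^i_s`, `f^i_s`, `g^i_s` and binary `b^i_s` satisfies the
MIMLP4 constraints, then the objective value `∑ᵢ ∑_{s ∈ S_i} (f^i_s + g^i_s)` is
`≥ ∑ᵢ |S_i|`, and if it equals `∑ᵢ |S_i|` then `x` is a Nash equilibrium. -/
theorem mimlp4_objective_bound_and_optimal_gives_nash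
    (n : ℕ) (hn : 2 ≤ n) (S : Fin n → Type)
    [∀ i, Fintype (S i)] [∀ i, Nonempty (S i)] [∀ i, DecidableEq (S i)]
    (A : Fin n → (∀ j, S j) → ℝ)
    (hU : ∀ i, 0 < payoffRange A i)
    (x : ∀ i, S i → ℝ)
    (hx0 : ∀ i s, 0 ≤ x i s) (hx1 : ∀ i, ∑ s, x i s = 1)
    (ubar : Fin n → ℝ) (u r f g b : ∀ i, S i → ℝ)
    (hfeas : ∀ (i : Fin n) (s : S i),
        (b i s = 0 ∨ b i s = 1) ∧
        u i s = purePayoff A x i s ∧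
        u i s ≤ ubar i ∧
        r i s = ubar i - u i s ∧
        0 ≤ r i s ∧
        r i s / payoffRange A i ≤ f i s ∧
        b i s ≤ f i s ∧
        x i s ≤ g i s ∧
        1 - b i s ≤ g i s) :
    ∑ i, (Fintype.card (S i) : ℝ) ≤ ∑ i, ∑ s, (f i s + g i s) ∧
    (∑ i, ∑ s, (f i s + g i s) = ∑ i, (Fintype.card (S i) : ℝ) →
      ∀ (i : Fin n) (y : S i → ℝ), (∀ s, 0 ≤ y s) → ∑ s, y s = 1 →
      expPayoff A (Function.update x i y) i ≤ expPayoff A x i) :=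
  mimlp4_objective_bound_and_optimal_gives_nash_general n S A hU x hx0 hx1 ubar u r f g b hfeas
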